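/- arXiv:2307.04594 — 3 statements merged into one kernel-verified Lean document; each statement's English description precedes it below -/
import Mathlib

section
/- Let G be a connected graph with a vertex cover U of size t. Then the lazy cop number satisfies c_lazy(G) ≤ ⌈t/2⌉ + 1, and the attacking cop number satisfies c_attack(G) ≤ ⌈t/2⌉ + 1. -/
open SimpleGraph

variable {V : Type*}

/-- A (positional) strategy for `k` cops on the graph `G`: an initial placement and a
move function; each cop may stay or move to an adjacent vertex. -/
structure CopStrat (G : SimpleGraph V) (k : ℕ) where
  init : Fin k → V
  move : (Fin k → V) → V → Fin k → V
  valid : ∀ c r i, move c r i = c i ∨ G.Adj (c i) (move c r i)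

/-- A strategy for the robber: an initial placement (knowing the cops' placement) and a
move function; the robber may stay or move to an adjacent vertex. -/
structure RobStrat (G : SimpleGraph V) (k : ℕ) where
  init : (Fin k → V) → V
  move : (Fin k → V) → V → V
  valid : ∀ c r, move c r = r ∨ G.Adj r (move c r)

/-- The play determined by initial placements and move functions: position of the cops and
of the robber after `n` full rounds (cops move first in each round). -/
def gplay {k : ℕ} (ci : Fin k → V) (cm : (Fin k → V) → V → Fin k → V)
    (ri : (Fin k → V) → V) (rm : (Fin k → V) → V → V) : ℕ → (Fin k → V) × V
  | 0 => (ci, ri ci)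
  | n + 1 =>
    let p := gplay ci cm ri rm n
    let c' := cm p.1 p.2
    (c', rm c' p.2)

/-- The robber is caught: at some moment (either on a cops' move, or because the
positions already coincide) a cop occupies the robber's vertex. -/
def gCaught {k : ℕ} (ci : Fin k → V) (cm : (Fin k → V) → V → Fin k → V)
    (ri : (Fin k → V) → V) (rm : (Fin k → V) → V → V) : Prop :=
  ∃ n, ∃ i,
    (gplay ci cm ri rm n).1 i = (gplay ci cm ri rm n).2 ∨
      cm (gplay ci cm ri rm n).1 (gplay ci cm ri rm n).2 i = (gplay ci cm ri rm n).2

/-- `k` cops have a winning strategy on `G`. -/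
def CopsWin (G : SimpleGraph V) (k : ℕ) : Prop :=
  ∃ CS : CopStrat G k, ∀ RS : RobStrat G k,
    gCaught CS.init CS.move RS.init RS.move

/-- The cop number of `G`. -/
noncomputable def copNumber (G : SimpleGraph V) : ℕ := sInf {k | CopsWin G k}

/-- A lazy cop strategy: at most one cop moves in each cops' turn. -/
structure LazyCopStrat (G : SimpleGraph V) (k : ℕ) extends CopStrat G k where
  lazy : ∀ c r i j, move c r i ≠ c i → move c r j ≠ c j → i = j

/-- `k` lazy cops have a winning strategy on `G`. -/
def LazyCopsWin (G : SimpleGraph V) (k : ℕ) : Prop :=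
  ∃ CS : LazyCopStrat G k, ∀ RS : RobStrat G k,
    gCaught CS.init CS.move RS.init RS.move

/-- The lazy cop number of `G`. -/
noncomputable def lazyCopNumber (G : SimpleGraph V) : ℕ := sInf {k | LazyCopsWin G k}

/-- A cop strategy in the attacking game: positions are `Option V` (`none` = eliminated);
eliminated cops stay eliminated, surviving cops stay or move to an adjacent vertex. -/
structure AttackCopStrat (G : SimpleGraph V) (k : ℕ) where
  init : Fin k → V
  move : (Fin k → Option V) → V → Fin k → Option V
  valid : ∀ c r i, (c i = none → move c r i = none) ∧
    ∀ x, c i = some x → move c r i = some x ∨ ∃ y, G.Adj x y ∧ move c r i = some y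

/-- A robber strategy in the attacking game; moving onto a vertex occupied by a cop
constitutes an attack. -/
structure AttackRobStrat (G : SimpleGraph V) (k : ℕ) where
  init : (Fin k → Option V) → V
  move : (Fin k → Option V) → V → V
  valid : ∀ c r, move c r = r ∨ G.Adj r (move c r)

/-- The play of the attacking game: in each round the cops move, then the robber moves;
if the robber moves onto a vertex occupied by exactly one cop, that cop is eliminated
(if it is occupied by two or more cops, nobody is eliminated and the robber will be
caught there). -/
def aplay [DecidableEq V] {G : SimpleGraph V} {k : ℕ}
    (CS : AttackCopStrat G k) (RS : AttackRobStrat G k) :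
    ℕ → (Fin k → Option V) × V
  | 0 => ((fun i => some (CS.init i)), RS.init fun i => some (CS.init i))
  | n + 1 =>
    let p := aplay CS RS n
    let c' := CS.move p.1 p.2
    let r' := RS.move c' p.2
    if r' ≠ p.2 ∧ (Finset.univ.filter fun i => c' i = some r').card = 1 then
      ((fun i => if c' i = some r' then none else c' i), r')
    else (c', r')

/-- The robber is caught in the attacking game: at some moment a (surviving) cop occupies
the robber's vertex, either after the cops' move or after the robber's move (in particular
when the robber attacks a vertex holding at least two cops). -/
def AttackCaught [DecidableEq V] {G : SimpleGraph V} {k : ℕ}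
    (CS : AttackCopStrat G k) (RS : AttackRobStrat G k) : Prop :=
  ∃ n, (∃ i, (aplay CS RS n).1 i = some (aplay CS RS n).2) ∨
    ∃ i, CS.move (aplay CS RS n).1 (aplay CS RS n).2 i = some (aplay CS RS n).2

/-- `k` cops have a winning strategy against an attacking robber on `G`. -/
def AttackCopsWin [DecidableEq V] (G : SimpleGraph V) (k : ℕ) : Prop :=
  ∃ CS : AttackCopStrat G k, ∀ RS : AttackRobStrat G k, AttackCaught CS RS

/-- The attacking cop number of `G`. -/
noncomputable def attackCopNumber [DecidableEq V] (G : SimpleGraph V) : ℕ :=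
  sInf {k | AttackCopsWin G k}

/-- A fully active cop strategy: every cop must move to an adjacent vertex each turn. -/
structure ActiveCopStrat (G : SimpleGraph V) (k : ℕ) where
  init : Fin k → V
  move : (Fin k → V) → V → Fin k → V
  valid : ∀ c r i, G.Adj (c i) (move c r i)

/-- A fully active robber strategy: the robber must move to an adjacent vertex each turn. -/
structure ActiveRobStrat (G : SimpleGraph V) (k : ℕ) where
  init : (Fin k → V) → V
  move : (Fin k → V) → V → V
  valid : ∀ c r, G.Adj r (move c r)

/-- `k` fully active cops have a winning strategy on `G` (against a fully active robber). -/
def ActiveCopsWin (G : SimpleGraph V) (k : ℕ) : Prop :=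
  ∃ CS : ActiveCopStrat G k, ∀ RS : ActiveRobStrat G k,
    gCaught CS.init CS.move RS.init RS.move

/-- The fully active cop number of `G`. -/
noncomputable def activeCopNumber (G : SimpleGraph V) : ℕ :=
  sInf {k | ActiveCopsWin G k}

/-- `U` is a vertex cover of `G`. -/
def IsVertexCover {V : Type*} (G : SimpleGraph V) (U : Finset V) : Prop :=
  ∀ ⦃x y : V⦄, G.Adj x y → x ∈ U ∨ y ∈ U

/-
Greedily make a vertex a station while it dominates two remaining vertices of `U`, discarding
the vertices it dominates. This leaves stations `S` and a rest `W` with `2|S| + |W| ≤ |U|`, every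
other vertex of `U` dominated by a station, and no vertex dominating two vertices of `W`. So
`⌈|U|/2⌉ + 1` cops suffice for a cop per station, a leader and, if `W ≠ ∅`, a spare cop.

Cops without a station, or not yet at it, travel as a caravan: a caravan cop next to the leader
joins it, and once all are together the leader steps along a geodesic, first to the
lowest-indexed unoccupied station, then to the vertex of `W` that the robber dominates. When all
stations are occupied the robber cannot enter `U \ W`, so every edge it uses has an end in `W`
and that vertex never changes. The lexicographic potential (unoccupied stations, leader's
distance to its goal, caravan cops away from the leader) drops every round until a cop next to
the robber captures it. Only one cop moves per turn, and an attacking robber can only attack the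
leader right after it left the other caravan cops or stepped next to a station cop; one of
those then captures the robber.
-/

namespace SimpleGraph

variable {G : SimpleGraph V}

-- Oriented so that the `valid` fields of the strategies are literally `G.Dominates`.
def Dominates (G : SimpleGraph V) (v w : V) : Prop := w = v ∨ G.Adj v w

@[refl]
lemma Dominates.refl (v : V) : G.Dominates v v := Or.inl rfl

lemma Dominates.symm {v w : V} (h : G.Dominates v w) : G.Dominates w v :=
  h.imp Eq.symm Adj.symm

lemma Dominates.adj {v w : V} (h : G.Dominates v w) (hne : v ≠ w) : G.Adj v w :=
  h.resolve_left hne.symm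

lemma Adj.dominates {v w : V} (h : G.Adj v w) : G.Dominates v w := Or.inr h

def Evades {ι : Type*} (G : SimpleGraph V) (r : V) (c : ι → V) : Prop :=
  ∀ i, ¬ G.Dominates (c i) r

lemma Evades.ne_of_adj {ι : Type*} {r r' : V} {c : ι → V} (h : G.Evades r c) (hr : G.Adj r r')
    (i : ι) : c i ≠ r' := fun hi => h i (hi ▸ hr.symm.dominates)

lemma Connected.exists_adj_dist_lt (hG : G.Connected) {a b : V} (h : a ≠ b) :
    ∃ y, G.Adj a y ∧ G.dist y b < G.dist a b := by
  obtain ⟨p, hp⟩ := hG.exists_walk_length_eq_dist a b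
  cases p with
  | nil => exact absurd rfl h
  | cons ha q => exact ⟨_, ha, hp ▸ (dist_le q).trans_lt (by simp)⟩

open Classical in
noncomputable def Connected.stepToward (hG : G.Connected) (a b : V) : V :=
  if h : a = b then a else (hG.exists_adj_dist_lt h).choose

lemma Connected.dominates_stepToward (hG : G.Connected) (a b : V) :
    G.Dominates a (hG.stepToward a b) := by
  unfold stepToward
  split_ifs with h
  · rfl
  · exact (hG.exists_adj_dist_lt h).choose_spec.1.dominates

lemma Connected.dist_stepToward_lt (hG : G.Connected) {a b : V} (h : a ≠ b) :
    G.dist (hG.stepToward a b) b < G.dist a b := by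
  rw [stepToward, dif_neg h]
  exact (hG.exists_adj_dist_lt h).choose_spec.2

open Finset Classical in
lemma card_filter_not_dominates_add_two_le {U : Finset V} {v w w' : V} (hw : w ∈ U)
    (hw' : w' ∈ U) (hne : w ≠ w') (hvw : G.Dominates v w) (hvw' : G.Dominates v w') :
    #(U.filter fun u => ¬ G.Dominates v u) + 2 ≤ #U := by
  have hpos : 1 < #(U.filter fun u => G.Dominates v u) :=
    one_lt_card.2 ⟨w, mem_filter.2 ⟨hw, hvw⟩, w', mem_filter.2 ⟨hw', hvw'⟩, hne⟩
  have := card_filter_add_card_filter_not (s := U) (fun u => G.Dominates v u)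
  omega

open Finset Classical in
lemma exists_stations (U : Finset V) :
    ∃ S W : Finset V, 2 * #S + #W ≤ #U ∧
      (∀ v w w', w ∈ W → w' ∈ W → G.Dominates v w → G.Dominates v w' → w = w') ∧
      ∀ u ∈ U, u ∉ W → ∃ s ∈ S, G.Dominates s u := by
  induction U using Finset.strongInduction with
  | H U ih =>
    by_cases hex :
        ∃ v w w', w ∈ U ∧ w' ∈ U ∧ w ≠ w' ∧ G.Dominates v w ∧ G.Dominates v w'
    · obtain ⟨v, w, w', hw, hw', hne, hvw, hvw'⟩ := hex
      obtain ⟨S, W, hSW, hW, hS⟩ := ih (U.filter fun u => ¬ G.Dominates v u)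
        (filter_ssubset.2 ⟨w, hw, not_not.2 hvw⟩)
      refine ⟨insert v S, W, ?_, hW, fun u hu huW => ?_⟩
      · have := card_filter_not_dominates_add_two_le hw hw' hne hvw hvw'
        have := card_insert_le v S
        omega
      by_cases hvu : G.Dominates v u
      · exact ⟨v, mem_insert_self _ _, hvu⟩
      · obtain ⟨s, hs, hsu⟩ := hS u (mem_filter.2 ⟨hu, hvu⟩) huW
        exact ⟨s, mem_insert_of_mem hs, hsu⟩
    · refine ⟨∅, U, by simp, fun v w w' hw hw' hvw hvw' => ?_, fun u hu hnu => absurd hu hnu⟩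
      by_contra hne
      exact hex ⟨v, w, w', hw, hw', hne, hvw, hvw'⟩

end SimpleGraph

open Finset in
lemma Finset.exists_fin_enum_of_card_le (S : Finset V) {m : ℕ} (hm : #S ≤ m) (v₀ : V) :
    ∃ f : Fin m → V, ∀ s ∈ S, ∃ i : Fin m, i.val < #S ∧ f i = s := by
  refine ⟨fun i => S.toList.getD i v₀, fun s hs => ?_⟩
  obtain ⟨j, hj, rfl⟩ := List.mem_iff_getElem.1 (mem_toList.2 hs)
  rw [length_toList] at hj
  exact ⟨⟨j, hj.trans_le hm⟩, hj, List.getD_eq_getElem _ _ _⟩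

structure CaravanPlan (G : SimpleGraph V) (k : ℕ) where
  connected : G.Connected
  cover : Finset V
  isVertexCover : _root_.IsVertexCover G cover
  W : Finset V
  eq_of_dominates :
    ∀ v w w', w ∈ W → w' ∈ W → G.Dominates v w → G.Dominates v w' → w = w'
  leader : Fin k
  stationed : Finset (Fin k)
  station : Fin k → V
  leader_notMem : leader ∉ stationed
  exists_station : ∀ u ∈ cover, u ∉ W → ∃ i ∈ stationed, G.Dominates (station i) u
  exists_spare : W.Nonempty → ∃ i ≠ leader, i ∉ stationed

namespace CaravanPlan

open Classical Finset Function

variable {G : SimpleGraph V} {k : ℕ} (P : CaravanPlan G k)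

noncomputable def start : V := P.connected.nonempty.some

def InCaravan (c : Fin k → V) (i : Fin k) : Prop := i ∉ P.stationed ∨ c i ≠ P.station i

def Lagging (c : Fin k → V) (i : Fin k) : Prop := P.InCaravan c i ∧ G.Adj (c i) (c P.leader)

def Cohesive (c : Fin k → V) : Prop := ∀ i, P.InCaravan c i → G.Dominates (c i) (c P.leader)

noncomputable def unposted (c : Fin k → V) : Finset (Fin k) :=
  P.stationed.filter fun i => c i ≠ P.station i

noncomputable def stragglers (c : Fin k → V) : Finset (Fin k) :=
  univ.filter fun i => P.InCaravan c i ∧ c i ≠ c P.leader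

noncomputable def target (r : V) : V :=
  if h : ∃ w ∈ P.W, G.Dominates r w then h.choose else r

noncomputable def goal (c : Fin k → V) (r : V) : V :=
  if h : (P.unposted c).Nonempty then P.station ((P.unposted c).min' h) else P.target r

/-- The cop that moves in position `(c, r)`, and its destination. -/
noncomputable def order (c : Fin k → V) (r : V) : Fin k × V :=
  if h : ∃ i, G.Dominates (c i) r then (h.choose, r)
  else if h : ∃ i, P.Lagging c i then (h.choose, c P.leader)
  else (P.leader, P.connected.stepToward (c P.leader) (P.goal c r))

noncomputable def move (c : Fin k → V) (r : V) : Fin k → V :=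
  update c (P.order c r).1 (P.order c r).2

noncomputable def potential (c : Fin k → V) (r : V) : ℕ ×ₗ ℕ ×ₗ ℕ :=
  toLex (#(P.unposted c), toLex (G.dist (c P.leader) (P.goal c r), #(P.stragglers c)))

variable {P}

lemma dominates_order (c : Fin k → V) (r : V) :
    G.Dominates (c (P.order c r).1) (P.order c r).2 := by
  unfold order
  split_ifs with h h'
  · exact h.choose_spec
  · exact h'.choose_spec.2.dominates
  · exact P.connected.dominates_stepToward _ _

lemma dominates_move (c : Fin k → V) (r : V) (i : Fin k) : G.Dominates (c i) (P.move c r i) := by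
  unfold move
  rcases eq_or_ne i (P.order c r).1 with rfl | hi
  · rw [update_self]; exact dominates_order c r
  · rw [update_of_ne hi]

lemma eq_mover_of_move_ne {c : Fin k → V} {r : V} {i : Fin k} (hi : P.move c r i ≠ c i) :
    i = (P.order c r).1 := by
  by_contra h
  exact hi (update_of_ne h _ _)

lemma evades_of_move_ne {c : Fin k → V} {r : V} (h : ∀ i, P.move c r i ≠ r) :
    G.Evades r c := by
  intro i hi
  have hex : ∃ i, G.Dominates (c i) r := ⟨i, hi⟩
  apply h hex.choose
  rw [move, order, dif_pos hex, update_self]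

lemma move_of_lagging {c : Fin k → V} {r : V} (hr : G.Evades r c) (hl : ∃ i, P.Lagging c i) :
    ∃ j, P.Lagging c j ∧ P.move c r = update c j (c P.leader) := by
  refine ⟨hl.choose, hl.choose_spec, ?_⟩
  rw [move, order, dif_neg (not_exists.2 hr), dif_pos hl]

lemma move_of_not_lagging {c : Fin k → V} {r : V} (hr : G.Evades r c)
    (hl : ¬∃ i, P.Lagging c i) :
    P.move c r = update c P.leader (P.connected.stepToward (c P.leader) (P.goal c r)) := by
  rw [move, order, dif_neg (not_exists.2 hr), dif_neg hl]

lemma Lagging.ne_leader {c : Fin k → V} {j : Fin k} (hj : P.Lagging c j) : j ≠ P.leader :=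
  fun h => hj.2.ne (congrArg c h)

lemma inCaravan_update_iff {c : Fin k → V} {i j : Fin k} (x : V) (h : i ≠ j) :
    P.InCaravan (update c j x) i ↔ P.InCaravan c i := by
  simp only [InCaravan, update_of_ne h]

lemma eq_leader_of_not_lagging {c : Fin k → V} (hc : P.Cohesive c) (hl : ¬∃ i, P.Lagging c i)
    {i : Fin k} (hi : P.InCaravan c i) : c i = c P.leader :=
  ((hc i hi).resolve_right fun h => hl ⟨i, hi, h⟩).symm

lemma cohesive_const (v : V) : P.Cohesive fun _ => v := fun _ _ => .refl v

lemma cohesive_move {c : Fin k → V} {r : V} (hc : P.Cohesive c) (hr : G.Evades r c) :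
    P.Cohesive (P.move c r) := by
  intro i hi
  by_cases hl : ∃ i, P.Lagging c i
  · obtain ⟨j, hj, hmove⟩ := move_of_lagging hr hl
    rw [hmove] at hi ⊢
    rw [update_of_ne hj.ne_leader.symm]
    rcases eq_or_ne i j with rfl | hij
    · rw [update_self]
    · rw [update_of_ne hij]
      exact hc i ((inCaravan_update_iff _ hij).1 hi)
  · rw [move_of_not_lagging hr hl] at hi ⊢
    rw [update_self]
    rcases eq_or_ne i P.leader with rfl | hiL
    · rw [update_self]
    · rw [update_of_ne hiL]
      rw [eq_leader_of_not_lagging hc hl ((inCaravan_update_iff _ hiL).1 hi)]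
      exact P.connected.dominates_stepToward _ _

lemma unposted_update_leader (c : Fin k → V) (x : V) :
    P.unposted (update c P.leader x) = P.unposted c := by
  refine filter_congr fun i hi => ?_
  rw [update_of_ne (ne_of_mem_of_not_mem hi P.leader_notMem)]

lemma unposted_update_lagging_subset {c : Fin k → V} {j : Fin k} (hj : P.Lagging c j) :
    P.unposted (update c j (c P.leader)) ⊆ P.unposted c := by
  intro i hi
  simp only [unposted, mem_filter] at hi ⊢
  refine ⟨hi.1, ?_⟩
  rcases eq_or_ne i j with rfl | hij
  · exact hj.1.resolve_left (not_not.2 hi.1)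
  · simpa [update_of_ne hij] using hi.2

lemma update_lagging_leader {c : Fin k → V} {j : Fin k} (hj : P.Lagging c j) :
    update c j (c P.leader) P.leader = c P.leader :=
  update_of_ne hj.ne_leader.symm _ _

lemma card_stragglers_update_lagging_lt {c : Fin k → V} {j : Fin k} (hj : P.Lagging c j) :
    #(P.stragglers (update c j (c P.leader))) < #(P.stragglers c) := by
  have hL := update_lagging_leader hj
  have hsub : P.stragglers (update c j (c P.leader)) ⊆ P.stragglers c := by
    intro i hi
    simp only [stragglers, mem_filter, mem_univ, true_and, hL] at hi ⊢
    rcases eq_or_ne i j with rfl | hij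
    · exact absurd (update_self ..) hi.2
    · rwa [inCaravan_update_iff _ hij, update_of_ne hij] at hi
  refine card_lt_card ((ssubset_iff_of_subset hsub).2 ⟨j, ?_, ?_⟩)
  · simpa [stragglers] using ⟨hj.1, hj.2.ne⟩
  · simp [stragglers, hL]

lemma dominates_target (r : V) : G.Dominates r (P.target r) := by
  unfold target
  split_ifs with h
  · exact h.choose_spec.2
  · rfl

lemma target_eq {v w : V} (hw : w ∈ P.W) (h : G.Dominates v w) : P.target v = w := by
  have hex : ∃ w ∈ P.W, G.Dominates v w := ⟨w, hw, h⟩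
  rw [target, dif_pos hex]
  exact P.eq_of_dominates v _ _ hex.choose_spec.1 hw hex.choose_spec.2 h

lemma exists_station_cop {c : Fin k → V} (hc : P.unposted c = ∅) {u : V} (hu : u ∈ P.cover)
    (huW : u ∉ P.W) : ∃ i ∈ P.stationed, G.Dominates (c i) u := by
  obtain ⟨i, hi, h⟩ := P.exists_station u hu huW
  have : c i = P.station i := by
    by_contra hne
    exact (eq_empty_iff_forall_notMem.1 hc i) (mem_filter.2 ⟨hi, hne⟩)
  exact ⟨i, hi, this ▸ h⟩

lemma mem_W_of_evades {c : Fin k → V} {r : V} (hc : P.unposted c = ∅) (hr : G.Evades r c)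
    (hu : r ∈ P.cover) : r ∈ P.W := by
  by_contra huW
  obtain ⟨i, -, hi⟩ := exists_station_cop hc hu huW
  exact hr i hi

/-- Once every station is occupied, the robber never leaves the star around a vertex of `W`. -/
lemma target_eq_target {c c' : Fin k → V} {r r' : V} (hc : P.unposted c = ∅)
    (hc' : P.unposted c' = ∅) (hr : G.Evades r c) (hr' : G.Evades r' c') (h : G.Dominates r r') :
    P.target r' = P.target r := by
  rcases h with rfl | hadj
  · rfl
  rcases P.isVertexCover hadj with h | h
  · have hW := mem_W_of_evades hc hr h
    rw [target_eq hW hadj.symm.dominates, target_eq hW (.refl _)]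
  · have hW := mem_W_of_evades hc' hr' h
    rw [target_eq hW (.refl _), target_eq hW hadj.dominates]

lemma goal_eq_goal {c c' : Fin k → V} {r r' : V} (hr : G.Evades r c) (hr' : G.Evades r' c')
    (h : G.Dominates r r') (hu : P.unposted c' = P.unposted c) : P.goal c' r' = P.goal c r := by
  by_cases hne : (P.unposted c).Nonempty
  · simp only [goal, hu, dif_pos hne]
  · rw [not_nonempty_iff_eq_empty] at hne
    simp only [goal, hu, hne, Finset.not_nonempty_empty, dite_false]
    exact target_eq_target hne (hu.trans hne) hr hr' h

lemma leader_ne_goal {c : Fin k → V} {r : V} (hc : P.Cohesive c) (hl : ¬∃ i, P.Lagging c i)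
    (hr : G.Evades r c) : c P.leader ≠ P.goal c r := by
  unfold goal
  split_ifs with hne
  · have hmem := mem_filter.1 (min'_mem _ hne)
    rw [← eq_leader_of_not_lagging hc hl (Or.inr hmem.2)]
    exact hmem.2
  · exact fun h => hr P.leader (h ▸ (dominates_target r).symm)

lemma potential_move_lt {c : Fin k → V} {r r' : V} (hc : P.Cohesive c) (hr : G.Evades r c)
    (hr' : G.Evades r' (P.move c r)) (h : G.Dominates r r') :
    P.potential (P.move c r) r' < P.potential c r := by
  by_cases hl : ∃ i, P.Lagging c i
  · obtain ⟨j, hj, hmove⟩ := move_of_lagging hr hl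
    rw [hmove] at hr' ⊢
    rcases (unposted_update_lagging_subset hj).eq_or_ssubset with hu | hu
    · simp only [potential, Prod.Lex.toLex_lt_toLex, hu, update_lagging_leader hj,
        goal_eq_goal hr hr' h hu, lt_irrefl, false_or, true_and]
      exact card_stragglers_update_lagging_lt hj
    · exact Prod.Lex.toLex_lt_toLex.2 (Or.inl (card_lt_card hu))
  · rw [move_of_not_lagging hr hl] at hr' ⊢
    have hu := unposted_update_leader (P := P) c (P.connected.stepToward (c P.leader) (P.goal c r))
    simp only [potential, Prod.Lex.toLex_lt_toLex, hu, goal_eq_goal hr hr' h hu, update_self,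
      lt_irrefl, false_or, true_and]
    exact Or.inl (P.connected.dist_stepToward_lt (leader_ne_goal hc hl hr))

theorem gCaught_move (ri : (Fin k → V) → V) (rm : (Fin k → V) → V → V)
    (hrm : ∀ c r, G.Dominates r (rm c r)) : gCaught (fun _ => P.start) P.move ri rm := by
  by_contra hnc
  set play := gplay (fun _ => P.start) P.move ri rm
  have hevades (n : ℕ) : G.Evades (play n).2 (play n).1 :=
    evades_of_move_ne fun i h => hnc ⟨n, i, Or.inr h⟩
  have hcohesive (n : ℕ) : P.Cohesive (play n).1 := by
    induction n with
    | zero => exact cohesive_const P.start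
    | succ n ih => exact cohesive_move ih (hevades n)
  refine not_strictAnti_of_wellFoundedLT (fun n => P.potential (play n).1 (play n).2)
    (strictAnti_nat_of_succ_lt fun n => ?_)
  exact potential_move_lt (hcohesive n) (hevades n) (hevades (n + 1)) (hrm _ _)

variable (P) in
noncomputable def lazyStrat : LazyCopStrat G k where
  init _ := P.start
  move := P.move
  valid := dominates_move
  lazy _ _ _ _ hi hj := (eq_mover_of_move_ne hi).trans (eq_mover_of_move_ne hj).symm

theorem lazyCopsWin (P : CaravanPlan G k) : LazyCopsWin G k :=
  ⟨P.lazyStrat, fun RS => gCaught_move _ _ RS.valid⟩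

lemma exists_companion {c : Fin k → V} (hc : P.Cohesive c) (hl : ¬∃ i, P.Lagging c i)
    (h : (P.unposted c).Nonempty ∨ P.W.Nonempty) : ∃ j ≠ P.leader, c j = c P.leader := by
  rcases h with ⟨j, hj⟩ | hW
  · obtain ⟨hjS, hjc⟩ := mem_filter.1 hj
    exact ⟨j, ne_of_mem_of_not_mem hjS P.leader_notMem,
      eq_leader_of_not_lagging hc hl (.inr hjc)⟩
  · obtain ⟨j, hjL, hjS⟩ := P.exists_spare hW
    exact ⟨j, hjL, eq_leader_of_not_lagging hc hl (.inl hjS)⟩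

/-- Only the leader can be attacked, right after it left the other caravan cops or stepped next
to a station cop. -/
lemma exists_adj_move_of_attack {c : Fin k → V} {r r' : V} (hc : P.Cohesive c)
    (hr : G.Evades r c) (hadj : G.Adj r r') {i : Fin k} (hi : P.move c r i = r') :
    ∃ j, G.Adj (P.move c r j) r' := by
  by_cases hl : ∃ i, P.Lagging c i
  · obtain ⟨j, -, hmove⟩ := move_of_lagging hr hl
    rw [hmove] at hi
    rcases eq_or_ne i j with rfl | hij
    · exact absurd (by rwa [update_self] at hi) (hr.ne_of_adj hadj P.leader)
    · exact absurd (by rwa [update_of_ne hij] at hi) (hr.ne_of_adj hadj i)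
  rw [move_of_not_lagging hr hl] at hi ⊢
  obtain rfl : i = P.leader := by
    by_contra hiL
    exact hr.ne_of_adj hadj i (by rwa [update_of_ne hiL] at hi)
  rw [update_self] at hi
  have hLr' : G.Adj (c P.leader) r' :=
    (hi ▸ P.connected.dominates_stepToward _ _).adj (hr.ne_of_adj hadj _)
  by_cases hcomp : (P.unposted c).Nonempty ∨ P.W.Nonempty
  · obtain ⟨j, hjL, hj⟩ := exists_companion hc hl hcomp
    exact ⟨j, by rwa [update_of_ne hjL, hj]⟩
  simp only [not_or, not_nonempty_iff_eq_empty] at hcomp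
  rcases P.isVertexCover hadj with h | h
  · obtain ⟨j, -, hj⟩ := exists_station_cop hcomp.1 h (by simp [hcomp.2])
    exact absurd hj (hr j)
  · obtain ⟨j, hjS, hj⟩ := exists_station_cop hcomp.1 h (by simp [hcomp.2])
    refine ⟨j, ?_⟩
    rw [update_of_ne (ne_of_mem_of_not_mem hjS P.leader_notMem)]
    exact hj.adj (hr.ne_of_adj hadj j)

variable (P) in
/-- After an elimination the robber stands next to a surviving cop, so from then on the cops
only need to capture. -/
noncomputable def attackStrat : AttackCopStrat G k where
  init _ := P.start
  move c r i := if h : ∀ j, (c j).isSome then some (P.move (fun j => (c j).get (h j)) r i)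
    else (c i).map fun x => if G.Adj x r then r else x
  valid c r i := by
    refine ⟨fun hi => ?_, fun x hx => ?_⟩
    · rw [dif_neg fun h => by simpa [hi] using h i, hi, Option.map_none]
    split_ifs with h
    · have hget : (c i).get (h i) = x := by simp [hx]
      rcases dominates_move (fun j => (c j).get (h j)) r i with h' | h'
      · exact .inl (by rw [h', hget])
      · exact .inr ⟨_, hget ▸ h', rfl⟩
    · rw [hx, Option.map_some]
      split_ifs with hadj
      · exact .inr ⟨r, hadj, rfl⟩
      · exact .inl rfl

lemma attackStrat_move_some (c : Fin k → V) (r : V) :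
    P.attackStrat.move (fun i => some (c i)) r = fun i => some (P.move c r i) :=
  funext fun _ => dif_pos fun _ => rfl

lemma attackStrat_move_of_adj {c : Fin k → Option V} {r y : V} {i j : Fin k} (hi : c i = none)
    (hj : c j = some y) (hadj : G.Adj y r) : P.attackStrat.move c r j = some r := by
  change dite _ _ _ = _
  rw [dif_neg fun h => by simpa [hi] using h i, hj, Option.map_some, if_pos hadj]

section Attack

variable [DecidableEq V] (RS : AttackRobStrat G k)

lemma evades_of_not_attackCaught {n : ℕ} {c : Fin k → V} {r : V}
    (hn : aplay P.attackStrat RS n = (fun i => some (c i), r))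
    (hnc : ¬ AttackCaught P.attackStrat RS) : G.Evades r c := by
  refine evades_of_move_ne (P := P) fun i h => hnc ⟨n, .inr ⟨i, ?_⟩⟩
  rw [hn, attackStrat_move_some]
  exact congrArg some h

lemma aplay_succ_of_evades {n : ℕ} {c : Fin k → V} {r : V}
    (hn : aplay P.attackStrat RS n = (fun i => some (c i), r)) (hc : P.Cohesive c)
    (hr : G.Evades r c)
    (hnc : ¬ ∃ i, P.attackStrat.move (aplay P.attackStrat RS (n + 1)).1
      (aplay P.attackStrat RS (n + 1)).2 i = some (aplay P.attackStrat RS (n + 1)).2) :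
    aplay P.attackStrat RS (n + 1) =
      (fun i => some (P.move c r i), RS.move (fun i => some (P.move c r i)) r) := by
  rw [aplay, hn, attackStrat_move_some] at hnc ⊢
  dsimp only at hnc ⊢
  split_ifs at hnc ⊢ with hkill
  · obtain ⟨hmoved, hlone⟩ := hkill
    obtain ⟨i, hi⟩ := card_pos.1 (hlone ▸ Nat.one_pos)
    have hi := Option.some_inj.1 (mem_filter.1 hi).2
    obtain ⟨j, hj⟩ := exists_adj_move_of_attack hc hr ((RS.valid _ _).resolve_left hmoved) hi
    refine absurd ⟨j, attackStrat_move_of_adj (i := i) ?_ ?_ hj⟩ hnc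
    · simp [hi]
    · simp [hj.ne]
  · rfl

theorem attackCopsWin (P : CaravanPlan G k) : AttackCopsWin G k := by
  refine ⟨P.attackStrat, fun RS => ?_⟩
  by_contra hnc
  set play := gplay (fun _ => P.start) P.move (fun c => RS.init fun i => some (c i))
    (fun c r => RS.move (fun i => some (c i)) r)
  -- no cop is ever eliminated, so the game follows the ordinary play `play`
  have hmirror (n : ℕ) : aplay P.attackStrat RS n = (fun i => some ((play n).1 i), (play n).2) ∧
      P.Cohesive (play n).1 := by
    induction n with
    | zero => exact ⟨rfl, cohesive_const _⟩
    | succ n ih =>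
      have hr := evades_of_not_attackCaught RS ih.1 hnc
      exact ⟨aplay_succ_of_evades RS ih.1 ih.2 hr fun h => hnc ⟨n + 1, .inr h⟩,
        cohesive_move ih.2 hr⟩
  obtain ⟨n, i, h⟩ := gCaught_move (P := P) _ _ fun c r => RS.valid _ _
  refine hnc ⟨n, ?_⟩
  rw [(hmirror n).1, attackStrat_move_some]
  exact h.imp (fun h => ⟨i, congrArg some h⟩) (fun h => ⟨i, congrArg some h⟩)

end Attack

theorem nonempty_of_isVertexCover (hG : G.Connected) {U : Finset V}
    (hU : _root_.IsVertexCover G U) : Nonempty (CaravanPlan G ((#U + 1) / 2 + 1)) := by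
  obtain ⟨S, W, hcard, hW, hS⟩ := exists_stations (G := G) U
  obtain ⟨f, hf⟩ :=
    exists_fin_enum_of_card_le S (m := (#U + 1) / 2 + 1) (by omega) hG.nonempty.some
  refine ⟨
    { connected := hG
      cover := U
      isVertexCover := hU
      W := W
      eq_of_dominates := hW
      leader := Fin.last _
      stationed := univ.filter (·.val < #S)
      station := f
      leader_notMem := by simp; omega
      exists_station := fun u hu huW => ?_
      exists_spare := fun hWne => ?_ }⟩
  · obtain ⟨s, hs, hsu⟩ := hS u hu huW
    obtain ⟨i, hi, rfl⟩ := hf s hs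
    exact ⟨i, by simpa using hi, hsu⟩
  · have := hWne.card_pos
    exact ⟨⟨#S, by omega⟩, by simp [Fin.ext_iff]; omega, by simp⟩

end CaravanPlan

theorem lazy_attack_copNumber_le_vertexCover_general
    {V : Type*} [DecidableEq V] (G : SimpleGraph V) (hG : G.Connected)
    (U : Finset V) (hU : _root_.IsVertexCover G U) (t : ℕ) (ht : U.card = t) :
    lazyCopNumber G ≤ (t + 1) / 2 + 1 ∧ attackCopNumber G ≤ (t + 1) / 2 + 1 := by
  subst ht
  obtain ⟨P⟩ := CaravanPlan.nonempty_of_isVertexCover hG hU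
  exact ⟨Nat.sInf_le P.lazyCopsWin, Nat.sInf_le P.attackCopsWin⟩

/-- If a connected graph `G` has a vertex cover of size `t`, then
`c_lazy(G) ≤ ⌈t/2⌉ + 1` and `c_attack(G) ≤ ⌈t/2⌉ + 1`. -/
theorem lazy_attack_copNumber_le_vertexCover
    {V : Type*} [Fintype V] [DecidableEq V] (G : SimpleGraph V) (hG : G.Connected)
    (U : Finset V) (hU : _root_.IsVertexCover G U) (t : ℕ) (ht : U.card = t) :
    lazyCopNumber G ≤ (t + 1) / 2 + 1 ∧ attackCopNumber G ≤ (t + 1) / 2 + 1 :=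
  lazy_attack_copNumber_le_vertexCover_general G hG U hU t ht
end

section
/- Let G⃗ be a strongly connected directed graph with distinct vertices u, v such that N⁺(u) ⊆ N⁺(v) and N⁻(u) ⊆ N⁻(v), and let H⃗ = G⃗[V(G⃗)\{u}]. Then H⃗ is strongly connected, and for every k ≥ 2, k cops have a winning strategy in G⃗ if and only if k cops have a winning strategy in H⃗. -/
open SimpleGraph

variable {V : Type*}

/-- A cop strategy on a directed graph with arc relation `A`: each cop stays or moves
along an arc. -/
structure DCopStrat (A : V → V → Prop) (k : ℕ) where
  init : Fin k → V
  move : (Fin k → V) → V → Fin k → V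
  valid : ∀ c r i, move c r i = c i ∨ A (c i) (move c r i)

/-- A robber strategy on a directed graph with arc relation `A`. -/
structure DRobStrat (A : V → V → Prop) (k : ℕ) where
  init : (Fin k → V) → V
  move : (Fin k → V) → V → V
  valid : ∀ c r, move c r = r ∨ A r (move c r)

/-- `k` cops have a winning strategy on the directed graph with arc relation `A`. -/
def DCopsWin (A : V → V → Prop) (k : ℕ) : Prop :=
  ∃ CS : DCopStrat A k, ∀ RS : DRobStrat A k,
    gCaught CS.init CS.move RS.init RS.move

/-- The cop number of the directed graph with arc relation `A`. -/
noncomputable def dCopNumber (A : V → V → Prop) : ℕ := sInf {k | DCopsWin A k}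

-- ===== attractor machinery =====

def copStep (A : V → V → Prop) {k : ℕ} (c c' : Fin k → V) : Prop :=
  ∀ i, c' i = c i ∨ A (c i) (c' i)

def Pre (A : V → V → Prop) {k : ℕ} (S : Set ((Fin k → V) × V)) : Set ((Fin k → V) × V) :=
  {s | ∃ c', copStep A s.1 c' ∧
    ((∃ i, c' i = s.2) ∨ ∀ r', (r' = s.2 ∨ A s.2 r') → (∃ i, c' i = r') ∨ (c', r') ∈ S)}

def Wn (A : V → V → Prop) (k : ℕ) : ℕ → Set ((Fin k → V) × V)
  | 0 => {s | ∃ i, s.1 i = s.2}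
  | n + 1 => Wn A k n ∪ Pre A (Wn A k n)

def Wset (A : V → V → Prop) (k : ℕ) : Set ((Fin k → V) × V) := ⋃ n, Wn A k n

def AWin (A : V → V → Prop) (k : ℕ) : Prop := ∃ c : Fin k → V, ∀ r, (c, r) ∈ Wset A k

lemma Pre_mono (A : V → V → Prop) {k : ℕ} {S T : Set ((Fin k → V) × V)} (h : S ⊆ T) :
    Pre A S ⊆ Pre A T := by
  rintro s ⟨c', hc', hd⟩
  refine ⟨c', hc', ?_⟩
  rcases hd with h1 | h2
  · exact Or.inl h1
  · exact Or.inr fun r' hr' => (h2 r' hr').imp id fun hw => h hw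

lemma Wn_mono (A : V → V → Prop) (k : ℕ) : Monotone (Wn A k) := by
  refine monotone_nat_of_le_succ fun n => ?_
  exact Set.subset_union_left

lemma Wn_subset_Wset (A : V → V → Prop) (k : ℕ) (n : ℕ) : Wn A k n ⊆ Wset A k :=
  Set.subset_iUnion (Wn A k) n

lemma Pre_Wset_subset [Fintype V] (A : V → V → Prop) (k : ℕ) :
    Pre A (Wset A k) ⊆ Wset A k := by
  classical
  rintro s ⟨c', hc', hd⟩
  rcases hd with h1 | h2
  · exact Wn_subset_Wset A k 1 (Or.inr ⟨c', hc', Or.inl h1⟩)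
  · set f : V → ℕ := fun r' => sInf {n | (c', r') ∈ Wn A k n} with hf
    set N : ℕ := Finset.univ.sup f with hN
    refine Wn_subset_Wset A k (N + 1) (Or.inr ⟨c', hc', Or.inr fun r' hr' => ?_⟩)
    rcases h2 r' hr' with h | h
    · exact Or.inl h
    · refine Or.inr ?_
      have hne : {n | (c', r') ∈ Wn A k n}.Nonempty := Set.mem_iUnion.1 h
      have h1 : (c', r') ∈ Wn A k (f r') := Nat.sInf_mem hne
      exact Wn_mono A k (Finset.le_sup (Finset.mem_univ r')) h1

lemma one_move_win (A : V → V → Prop) {k : ℕ} {c : Fin k → V} {x r : V} (i : Fin k)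
    (hci : c i = x) (h : x = r ∨ A x r) : (c, r) ∈ Wset A k := by
  classical
  rcases h with rfl | h
  · exact Wn_subset_Wset A k 0 ⟨i, hci⟩
  · refine Wn_subset_Wset A k 1 (Or.inr ⟨Function.update c i r, ?_, Or.inl ⟨i, Function.update_self i r c⟩⟩)
    intro j
    by_cases hj : j = i
    · subst hj
      refine Or.inr ?_
      show A (c j) (Function.update c j r j)
      rw [Function.update_self, hci]
      exact h
    · refine Or.inl ?_
      show Function.update c i r j = c j
      rw [Function.update_of_ne hj]

noncomputable def rk (A : V → V → Prop) (k : ℕ) (s : (Fin k → V) × V) : ℕ :=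
  sInf {n | s ∈ Wn A k n}

lemma rk_mem {A : V → V → Prop} {k : ℕ} {s : (Fin k → V) × V} (h : s ∈ Wset A k) :
    s ∈ Wn A k (rk A k s) :=
  Nat.sInf_mem (Set.mem_iUnion.1 h)

lemma rk_le {A : V → V → Prop} {k : ℕ} {s : (Fin k → V) × V} {n : ℕ} (h : s ∈ Wn A k n) :
    rk A k s ≤ n := Nat.sInf_le h

open Classical in
noncomputable def goodMove (A : V → V → Prop) (k : ℕ) (c : Fin k → V) (r : V) : Fin k → V :=
  if h : ∃ c', copStep A c c' ∧ ((∃ i, c' i = r) ∨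
      ∀ r', (r' = r ∨ A r r') → (∃ i, c' i = r') ∨
        ∃ m, (c', r') ∈ Wn A k m ∧ m < rk A k (c, r)) then h.choose else c

lemma goodMove_valid (A : V → V → Prop) (k : ℕ) (c : Fin k → V) (r : V) :
    copStep A c (goodMove A k c r) := by
  unfold goodMove
  split
  · next h => exact h.choose_spec.1
  · intro i; exact Or.inl rfl

lemma goodMove_spec {A : V → V → Prop} {k : ℕ} {c : Fin k → V} {r : V}
    (h : (c, r) ∈ Wset A k) (hnc : ¬ ∃ i, c i = r) :
    (∃ i, goodMove A k c r i = r) ∨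
      ∀ r', (r' = r ∨ A r r') → (∃ i, goodMove A k c r i = r') ∨
        ∃ m, (goodMove A k c r, r') ∈ Wn A k m ∧ m < rk A k (c, r) := by
  have h0 : rk A k (c, r) ≠ 0 := by
    intro h0
    have := rk_mem h
    rw [h0] at this
    exact hnc this
  obtain ⟨m, hm⟩ := Nat.exists_eq_succ_of_ne_zero h0
  have hmem : (c, r) ∈ Wn A k (m + 1) := by
    have := rk_mem h
    rw [hm] at this
    exact this
  rcases hmem with hm2 | hm2
  · exact absurd (rk_le hm2) (by omega)
  · obtain ⟨c', hc', hd⟩ := hm2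
    have hcond : ∃ c', copStep A c c' ∧ ((∃ i, c' i = r) ∨
        ∀ r', (r' = r ∨ A r r') → (∃ i, c' i = r') ∨
          ∃ m', (c', r') ∈ Wn A k m' ∧ m' < rk A k (c, r)) := by
      refine ⟨c', hc', ?_⟩
      rcases hd with h1 | h2
      · exact Or.inl h1
      · exact Or.inr fun r' hr' => (h2 r' hr').imp id fun hw => ⟨m, hw, by omega⟩
    have heq : goodMove A k c r = hcond.choose := by
      unfold goodMove
      rw [dif_pos hcond]
    rw [heq]
    exact hcond.choose_spec.2

theorem AWin_to_DCopsWin {A : V → V → Prop} {k : ℕ} (h : AWin A k) : DCopsWin A k := by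
  classical
  obtain ⟨c₀, hc₀⟩ := h
  refine ⟨⟨c₀, goodMove A k, fun c r i => goodMove_valid A k c r i⟩, fun RS => ?_⟩
  show gCaught c₀ (goodMove A k) RS.init RS.move
  suffices H : ∀ N n, gplay c₀ (goodMove A k) RS.init RS.move n ∈ Wset A k →
      rk A k (gplay c₀ (goodMove A k) RS.init RS.move n) < N →
      gCaught c₀ (goodMove A k) RS.init RS.move by
    exact H (rk A k (gplay c₀ (goodMove A k) RS.init RS.move 0) + 1) 0 (hc₀ _) (by omega)
  intro N
  induction N with
  | zero => intro n _ h; omega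
  | succ N ih =>
    intro n hn hrk
    set s := gplay c₀ (goodMove A k) RS.init RS.move n with hs
    by_cases hcap : ∃ i, s.1 i = s.2
    · exact ⟨n, hcap.choose, Or.inl hcap.choose_spec⟩
    · have hn' : (s.1, s.2) ∈ Wset A k := by rw [Prod.mk.eta]; exact hn
      rcases goodMove_spec hn' hcap with h1 | h2
      · obtain ⟨i, hi⟩ := h1
        exact ⟨n, i, Or.inr hi⟩
      · have hval := RS.valid (goodMove A k s.1 s.2) s.2
        have e : gplay c₀ (goodMove A k) RS.init RS.move (n + 1) =
            (goodMove A k s.1 s.2, RS.move (goodMove A k s.1 s.2) s.2) := by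
          rw [hs]; rfl
        rcases h2 (RS.move (goodMove A k s.1 s.2) s.2) hval with h3 | ⟨m, hmem, hlt⟩
        · obtain ⟨i, hi⟩ := h3
          refine ⟨n + 1, i, Or.inl ?_⟩
          rw [e]
          exact hi
        · have hmem' : gplay c₀ (goodMove A k) RS.init RS.move (n + 1) ∈ Wn A k m := by
            rw [e]; exact hmem
          have hle : rk A k (gplay c₀ (goodMove A k) RS.init RS.move (n + 1)) ≤ m := rk_le hmem'
          have hlt2 : m < rk A k s := by
            have : rk A k (s.1, s.2) = rk A k s := by rw [Prod.mk.eta]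
            omega
          exact ih (n + 1) (Wn_subset_Wset A k m hmem') (by omega)

theorem DCopsWin_to_AWin [Fintype V] {A : V → V → Prop} {k : ℕ} (h : DCopsWin A k) :
    AWin A k := by
  classical
  by_contra hnw
  have hnw' : ∀ c : Fin k → V, ∃ r, (c, r) ∉ Wset A k := by
    intro c
    by_contra hc
    push_neg at hc
    exact hnw ⟨c, hc⟩
  obtain ⟨CS, hCS⟩ := h
  have notW_step : ∀ c r, (c, r) ∉ Wset A k → ∀ c', copStep A c c' →
      (∀ i, c' i ≠ r) ∧ ∃ r', (r' = r ∨ A r r') ∧ (∀ i, c' i ≠ r') ∧ (c', r') ∉ Wset A k := by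
    intro c r hcr c' hc'
    constructor
    · intro i hi
      exact hcr (Pre_Wset_subset A k ⟨c', hc', Or.inl ⟨i, hi⟩⟩)
    · by_contra hno
      push_neg at hno
      refine hcr (Pre_Wset_subset A k ⟨c', hc', Or.inr fun r' hr' => ?_⟩)
      by_cases hcap : ∃ i, c' i = r'
      · exact Or.inl hcap
      · push_neg at hcap
        exact Or.inr (hno r' hr' hcap)
  set RS : DRobStrat A k := {
    init := fun c => (hnw' c).choose
    move := fun c r => if h : ∃ r', (r' = r ∨ A r r') ∧ (∀ i, c i ≠ r') ∧ (c, r') ∉ Wset A k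
      then h.choose else r
    valid := by
      intro c r
      split
      · next h => exact h.choose_spec.1
      · exact Or.inl rfl } with hRS
  set p := gplay CS.init CS.move RS.init RS.move with hp
  have inv : ∀ n, p n ∉ Wset A k := by
    intro n
    induction n with
    | zero => exact (hnw' CS.init).choose_spec
    | succ n ih =>
      obtain ⟨h1, hex⟩ := notW_step (p n).1 (p n).2 ih (CS.move (p n).1 (p n).2)
        (fun i => CS.valid (p n).1 (p n).2 i)
      show ((CS.move (p n).1 (p n).2), RS.move (CS.move (p n).1 (p n).2) (p n).2) ∉ Wset A k
      have : RS.move (CS.move (p n).1 (p n).2) (p n).2 = hex.choose := by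
        show (if h : ∃ r', (r' = (p n).2 ∨ A (p n).2 r') ∧ (∀ i, CS.move (p n).1 (p n).2 i ≠ r') ∧
            (CS.move (p n).1 (p n).2, r') ∉ Wset A k then h.choose else (p n).2) = hex.choose
        rw [dif_pos hex]
      rw [this]
      exact hex.choose_spec.2.2
  obtain ⟨n, i, hcau⟩ := hCS RS
  rcases hcau with hcau | hcau
  · exact inv n (Wn_subset_Wset A k 0 ⟨i, hcau⟩)
  · obtain ⟨h1, _⟩ := notW_step (p n).1 (p n).2 (inv n) (CS.move (p n).1 (p n).2)
      (fun i => CS.valid (p n).1 (p n).2 i)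
    exact h1 i hcau

-- ===== transfer machinery =====

lemma claimB [Fintype V] (A : V → V → Prop) {k : ℕ}
    (u v : V) (hplus : ∀ w, A u w → A v w)
    (i j : Fin k) (hij : i ≠ j) :
    ∀ x : V, Relation.ReflTransGen A x u → ∀ c : Fin k → V, c i = v → c j = x →
      (c, u) ∈ Wset A k := by
  intro x hx
  induction hx using Relation.ReflTransGen.head_induction_on with
  | refl =>
    intro c _ hcj
    exact Wn_subset_Wset A k 0 ⟨j, hcj⟩
  | @head x y hxy hyu ih =>
    intro c hci hcj
    apply Pre_Wset_subset A k
    refine ⟨Function.update c j y, ?_, Or.inr fun r' hr' => ?_⟩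
    · intro m
      by_cases hm : m = j
      · subst hm
        refine Or.inr ?_
        show A (c m) (Function.update c m y m)
        rw [Function.update_self, hcj]
        exact hxy
      · refine Or.inl ?_
        show Function.update c j y m = c m
        rw [Function.update_of_ne hm]
    · rcases hr' with rfl | ha
      · refine Or.inr (ih (Function.update c j y) ?_ (Function.update_self j y c))
        rw [Function.update_of_ne hij]
        exact hci
      · refine Or.inr (one_move_win A i ?_ (Or.inr (hplus r' ha)))
        rw [Function.update_of_ne hij]
        exact hci

lemma cop_at_v_wins [Fintype V] (A : V → V → Prop)
    (hSC : ∀ x y : V, Relation.ReflTransGen A x y)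
    (u v : V) (hplus : ∀ w, A u w → A v w) {k : ℕ} (hk : 2 ≤ k)
    (c : Fin k → V) (i : Fin k) (hci : c i = v) : (c, u) ∈ Wset A k := by
  have h0 : (0 : ℕ) < k := by omega
  have h1 : (1 : ℕ) < k := by omega
  set j : Fin k := if i = ⟨0, h0⟩ then ⟨1, h1⟩ else ⟨0, h0⟩ with hj
  have hij : i ≠ j := by
    rw [hj]
    split
    · next h => rw [h]; intro hc; exact absurd (Fin.val_eq_of_eq hc) (by simp)
    · next h => exact h
  exact claimB A u v hplus i j hij (c j) (hSC (c j) u) c hci rfl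

open Classical in
noncomputable def proj (u v : V) (huv : u ≠ v) (w : V) : {w : V // w ≠ u} :=
  if h : w = u then ⟨v, Ne.symm huv⟩ else ⟨w, h⟩

lemma proj_ne {u v : V} (huv : u ≠ v) {w : V} (h : w ≠ u) : proj u v huv w = ⟨w, h⟩ :=
  dif_neg h

lemma proj_u {u v : V} (huv : u ≠ v) : proj u v huv u = ⟨v, Ne.symm huv⟩ :=
  dif_pos rfl

lemma step_proj {A : V → V → Prop} {u v : V} (huv : u ≠ v)
    (hplus : ∀ w, A u w → A v w) (hminus : ∀ w, A w u → A w v)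
    {a b : V} (h : b = a ∨ A a b) :
    proj u v huv b = proj u v huv a ∨ A (proj u v huv a).1 (proj u v huv b).1 := by
  rcases h with rfl | h
  · exact Or.inl rfl
  · by_cases ha : a = u <;> by_cases hb : b = u
    · refine Or.inr ?_
      rw [ha, hb, proj_u huv]
      rw [ha, hb] at h
      exact hminus v (hplus u h)
    · refine Or.inr ?_
      rw [ha, proj_u huv, proj_ne huv hb]
      rw [ha] at h
      exact hplus b h
    · refine Or.inr ?_
      rw [hb, proj_u huv, proj_ne huv ha]
      rw [hb] at h
      exact hminus a h
    · refine Or.inr ?_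
      rw [proj_ne huv ha, proj_ne huv hb]
      exact h

lemma transfer_AH {A : V → V → Prop} {u v : V} (huv : u ≠ v)
    (hplus : ∀ w, A u w → A v w) (hminus : ∀ w, A w u → A w v) {k : ℕ} :
    ∀ n (c : Fin k → V) (r : V) (hr : r ≠ u),
      (c, r) ∈ Wn A k n →
      ((fun i => proj u v huv (c i)), (⟨r, hr⟩ : {w : V // w ≠ u})) ∈
        Wn (fun a b : {w : V // w ≠ u} => A a.1 b.1) k n := by
  intro n
  induction n with
  | zero =>
    rintro c r hr ⟨i, hi⟩
    refine ⟨i, ?_⟩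
    show proj u v huv (c i) = (⟨r, hr⟩ : {w : V // w ≠ u})
    rw [show c i = r from hi, proj_ne huv hr]
  | succ n ih =>
    rintro c r hr (h | ⟨c', hc', hd⟩)
    · exact Or.inl (ih c r hr h)
    · refine Or.inr ⟨fun i => proj u v huv (c' i), ?_, ?_⟩
      · intro i
        exact step_proj huv hplus hminus (hc' i)
      · rcases hd with ⟨i, hi⟩ | hall
        · refine Or.inl ⟨i, ?_⟩
          show proj u v huv (c' i) = (⟨r, hr⟩ : {w : V // w ≠ u})
          rw [show c' i = r from hi, proj_ne huv hr]
        · refine Or.inr fun r'' hr'' => ?_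
          have hlift : r''.1 = r ∨ A r r''.1 := by
            rcases hr'' with h | h
            · exact Or.inl (congrArg Subtype.val h)
            · exact Or.inr h
          rcases hall r''.1 hlift with ⟨i, hi⟩ | hw
          · refine Or.inl ⟨i, ?_⟩
            show proj u v huv (c' i) = r''
            rw [show c' i = r''.1 from hi, proj_ne huv r''.2]
          · exact Or.inr (ih c' r''.1 r''.2 hw)

lemma transfer_HA [Fintype V] {A : V → V → Prop}
    (hSC : ∀ x y : V, Relation.ReflTransGen A x y)
    {u v : V} (huv : u ≠ v)
    (hplus : ∀ w, A u w → A v w) (hminus : ∀ w, A w u → A w v)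
    {k : ℕ} (hk : 2 ≤ k) :
    ∀ n (c : Fin k → {w : V // w ≠ u}) (r : {w : V // w ≠ u}),
      (c, r) ∈ Wn (fun a b : {w : V // w ≠ u} => A a.1 b.1) k n →
      ((fun i => (c i).1, r.1) ∈ Wset A k ∧
        (r.1 = v → ((fun i => (c i).1), u) ∈ Wset A k)) := by
  intro n
  induction n with
  | zero =>
    rintro c r ⟨i, hi⟩
    constructor
    · exact Wn_subset_Wset A k 0 ⟨i, congrArg Subtype.val hi⟩
    · intro hrv
      refine cop_at_v_wins A hSC u v hplus hk _ i ?_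
      rw [show c i = r from hi]
      exact hrv
  | succ n ih =>
    rintro c r (h | ⟨c', hc', hd⟩)
    · exact ih c r h
    · have hstep : copStep A (fun i => (c i).1) (fun i => (c' i).1) := by
        intro i
        rcases hc' i with h | h
        · exact Or.inl (congrArg Subtype.val h)
        · exact Or.inr h
      rcases hd with ⟨i, hi⟩ | hall
      · -- shadow capture case
        constructor
        · apply Pre_Wset_subset A k
          exact ⟨fun i => (c' i).1, hstep, Or.inl ⟨i, congrArg Subtype.val hi⟩⟩
        · intro hrv
          have hciv : (c' i).1 = v := by rw [show c' i = r from hi]; exact hrv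
          apply Pre_Wset_subset A k
          refine ⟨fun i => (c' i).1, hstep, Or.inr fun r' hr' => ?_⟩
          by_cases hr'u : r' = u
          · refine Or.inr ?_
            rw [show r' = u from hr'u]
            exact cop_at_v_wins A hSC u v hplus hk _ i hciv
          · have hA : A u r' := hr'.resolve_left hr'u
            exact Or.inr (one_move_win A i hciv (Or.inr (hplus r' hA)))
      · -- general case
        constructor
        · apply Pre_Wset_subset A k
          refine ⟨fun i => (c' i).1, hstep, Or.inr fun r' hr' => ?_⟩
          by_cases hr'u : r' = u
          · have hAv : A r.1 v := by
              have hA : A r.1 r' := by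
                rcases hr' with h | h
                · exact absurd (h.symm.trans hr'u) r.2
                · exact h
              rw [hr'u] at hA
              exact hminus r.1 hA
            rcases hall ⟨v, Ne.symm huv⟩ (Or.inr hAv) with ⟨i, hi⟩ | hw
            · refine Or.inr ?_
              rw [show r' = u from hr'u]
              exact cop_at_v_wins A hSC u v hplus hk _ i (congrArg Subtype.val hi)
            · refine Or.inr ?_
              rw [show r' = u from hr'u]
              exact (ih c' ⟨v, Ne.symm huv⟩ hw).2 rfl
          · have hlift : (⟨r', hr'u⟩ : {w : V // w ≠ u}) = r ∨ A r.1 r' := by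
              rcases hr' with h | h
              · exact Or.inl (Subtype.ext h)
              · exact Or.inr h
            rcases hall ⟨r', hr'u⟩ hlift with ⟨i, hi⟩ | hw
            · exact Or.inl ⟨i, congrArg Subtype.val hi⟩
            · exact Or.inr ((ih c' ⟨r', hr'u⟩ hw).1)
        · intro hrv
          apply Pre_Wset_subset A k
          refine ⟨fun i => (c' i).1, hstep, Or.inr fun r' hr' => ?_⟩
          by_cases hr'u : r' = u
          · rcases hall r (Or.inl rfl) with ⟨i, hi⟩ | hw
            · refine Or.inr ?_
              rw [show r' = u from hr'u]
              refine cop_at_v_wins A hSC u v hplus hk _ i ?_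
              rw [show c' i = r from hi]; exact hrv
            · refine Or.inr ?_
              rw [show r' = u from hr'u]
              exact (ih c' r hw).2 hrv
          · have hA : A u r' := hr'.resolve_left hr'u
            have hlift : A r.1 r' := by rw [hrv]; exact hplus r' hA
            rcases hall ⟨r', hr'u⟩ (Or.inr hlift) with ⟨i, hi⟩ | hw
            · exact Or.inl ⟨i, congrArg Subtype.val hi⟩
            · exact Or.inr ((ih c' ⟨r', hr'u⟩ hw).1)

lemma lift_path {A : V → V → Prop} {u v : V} (huv : u ≠ v)
    (hplus : ∀ w, A u w → A v w) (hminus : ∀ w, A w u → A w v) :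
    ∀ a b : V, Relation.ReflTransGen A a b →
      Relation.ReflTransGen (fun a b : {w : V // w ≠ u} => A a.1 b.1)
        (proj u v huv a) (proj u v huv b) := by
  intro a b h
  induction h with
  | refl => exact Relation.ReflTransGen.refl
  | tail hR hbc ih =>
    rcases step_proj huv hplus hminus (Or.inr hbc) with heq | harc
    · rw [heq]; exact ih
    · exact ih.tail harc


/-- Let `A` be a strongly connected directed graph on `V` with distinct vertices `u, v`
such that `N⁺(u) ⊆ N⁺(v)` and `N⁻(u) ⊆ N⁻(v)`. Then the induced directed graph on
`V \ {u}` is strongly connected, and for every `k ≥ 2`, `k` cops win on `A` iff `k` cops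
win on the induced directed graph. -/
theorem directed_delete_dominated_vertex
    {V : Type*} [Fintype V] (A : V → V → Prop)
    (hSC : ∀ x y : V, Relation.ReflTransGen A x y)
    (u v : V) (huv : u ≠ v)
    (hplus : ∀ w, A u w → A v w)
    (hminus : ∀ w, A w u → A w v) :
    (∀ x y : {w : V // w ≠ u},
        Relation.ReflTransGen (fun a b : {w : V // w ≠ u} => A a.1 b.1) x y) ∧
      ∀ k : ℕ, 2 ≤ k →
        (DCopsWin A k ↔ DCopsWin (fun a b : {w : V // w ≠ u} => A a.1 b.1) k) := by

  classical
  constructor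
  · intro x y
    have h := lift_path huv hplus hminus x.1 y.1 (hSC x.1 y.1)
    rw [proj_ne huv x.2, proj_ne huv y.2] at h
    exact h
  · intro k hk
    haveI : Fintype {w : V // w ≠ u} := Fintype.ofFinite _
    constructor
    · intro h
      apply AWin_to_DCopsWin
      obtain ⟨c₀, hc₀⟩ := DCopsWin_to_AWin h
      refine ⟨fun i => proj u v huv (c₀ i), fun r => ?_⟩
      obtain ⟨n, hn⟩ := Set.mem_iUnion.1 (hc₀ r.1)
      exact Wn_subset_Wset _ k n (transfer_AH huv hplus hminus n c₀ r.1 r.2 hn)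
    · intro h
      apply AWin_to_DCopsWin
      obtain ⟨c₀, hc₀⟩ := DCopsWin_to_AWin h
      refine ⟨fun i => (c₀ i).1, fun r => ?_⟩
      by_cases hr : r = u
      · rw [hr]
        obtain ⟨n, hn⟩ := Set.mem_iUnion.1 (hc₀ ⟨v, Ne.symm huv⟩)
        exact (transfer_HA hSC huv hplus hminus hk n c₀ ⟨v, Ne.symm huv⟩ hn).2 rfl
      · obtain ⟨n, hn⟩ := Set.mem_iUnion.1 (hc₀ ⟨r, hr⟩)
        exact (transfer_HA hSC huv hplus hminus hk n c₀ ⟨r, hr⟩ hn).1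
end

section
/- For every k ∈ ℕ there exists a connected graph G with a vertex cover U such that: every vertex of I = V(G)\U has degree at most 3; every vertex v ∈ U has |N[v] ∩ U| ≤ 3; every isometric path in G contains at most 3 vertices of U; and yet c(G) > k. -/
open SimpleGraph

variable {V : Type*}

/-!
Let `H` be the Kneser graph of `s`-subsets of an `n`-set, with `s = k + 1` and `n = (k + 3) s`.
Any two `s`-sets are disjoint from a third one, so `H` has diameter 2; and for a vertex `u` and at
most `k` other vertices `X` there is an `s`-set disjoint from `u` that meets, and differs from,
every member of `X`: one point outside `u` from each member of `X`, plus one fresh point.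

Let `G` be the subdivision of `H` and `U` its original vertices. Every edge of `G` joins `U` to its
complement, so a walk of length `ℓ` whose ends contribute `ε ≤ 2` vertices of `U` visits `U`
exactly `(ℓ + ε) / 2` times; the diameter of `H` bounds the length of an isometric path by `6 - ε`,
hence it meets `U` at most three times.

Against `k` cops the robber alternates between a subdivision vertex of an edge `uw` and the
original vertex `w`, keeping `w` at distance at least 3 from every cop while he waits on the edge.
A cop then needs two moves to reach `w`, so the robber can step onto `w`, and from `w` he escapes
to the edge towards a neighbour chosen by the Kneser property above.
-/

open Finset

lemma List.ncard_setOf_mem_and_le_countP {α : Type*} (l : List α) (P : α → Bool) :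
    {x | x ∈ l ∧ P x}.ncard ≤ l.countP P := by
  classical
  have h : {x | x ∈ l ∧ P x} = ↑(l.filter P).toFinset := by ext; simp
  rw [h, Set.ncard_coe_finset, List.countP_eq_length_filter]
  exact List.toFinset_card_le _

namespace SimpleGraph

variable {W : Type*} {G : SimpleGraph V} {G' : SimpleGraph W} {j k : ℕ}

lemma Hom.edist_le (f : G →g G') (u v : V) : G'.edist (f u) (f v) ≤ G.edist u v :=
  le_sInf <| by rintro _ ⟨p, rfl⟩; simpa using (p.map f).edist_le

lemma Iso.dist_eq (φ : G ≃g G') (u v : V) : G'.dist (φ u) (φ v) = G.dist u v := by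
  exact congrArg ENat.toNat <|
    le_antisymm (φ.toHom.edist_le u v) (by simpa using φ.symm.toHom.edist_le (φ u) (φ v))

lemma Iso.neighborSet_apply (φ : G ≃g G') (v : V) :
    G'.neighborSet (φ v) = φ '' G.neighborSet v := by
  ext w
  obtain ⟨w, rfl⟩ := φ.surjective w
  simp [φ.injective.mem_set_image, φ.map_adj_iff]

lemma CopsWin.of_iso (φ : G ≃g G') (h : CopsWin G' j) : CopsWin G j := by
  obtain ⟨CS, hCS⟩ := h
  let ci : Fin j → V := fun i => φ.symm (CS.init i)
  let cm : (Fin j → V) → V → Fin j → V := fun c r i => φ.symm (CS.move (φ ∘ c) (φ r) i)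
  refine ⟨⟨ci, cm, fun c r i => ?_⟩, fun RS => ?_⟩
  · rcases CS.valid (φ ∘ c) (φ r) i with h | h
    · exact .inl (by simpa using congrArg φ.symm h)
    · exact .inr (by simpa using φ.symm.map_adj_iff.2 h)
  let RS' : RobStrat G' j :=
    ⟨fun c => φ (RS.init (φ.symm ∘ c)), fun c r => φ (RS.move (φ.symm ∘ c) (φ.symm r)),
      fun c r => (RS.valid (φ.symm ∘ c) (φ.symm r)).imp (fun h => by simp [h])
        (fun h => by simpa using φ.map_adj_iff.2 h)⟩
  have hplay : ∀ m, gplay CS.init CS.move RS'.init RS'.move m =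
      (φ ∘ (gplay ci cm RS.init RS.move m).1, φ (gplay ci cm RS.init RS.move m).2) := by
    intro m
    induction m with
    | zero => simp [gplay, RS', ci, Function.comp_def]
    | succ m ih =>
      simp only [gplay, ih]
      simp [RS', cm, Function.comp_def]
  obtain ⟨m, i, hcaught⟩ := hCS RS'
  rw [hplay] at hcaught
  exact ⟨m, i, hcaught.imp (fun h => φ.injective h) (fun h => by simpa using congrArg φ.symm h)⟩

lemma Iso.copNumber_eq (φ : G ≃g G') : copNumber G' = copNumber G := by
  simp only [copNumber]
  congr
  ext j
  exact ⟨.of_iso φ, .of_iso φ.symm⟩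

lemma not_copsWin_of_invariant (Inv : (Fin j → V) → V → Prop)
    (far : ∀ {c r}, Inv c r → ∀ i, c i ≠ r ∧ ¬ G.Adj (c i) r)
    (init : ∀ c, ∃ r, Inv c r)
    (step : ∀ {c r c'}, Inv c r → (∀ i, c' i = c i ∨ G.Adj (c i) (c' i)) → (∀ i, c' i ≠ r) →
      ∃ r', (r' = r ∨ G.Adj r r') ∧ Inv c' r') :
    ¬ CopsWin G j := by
  classical
  have uncaught : ∀ {c r} {c' : Fin j → V}, Inv c r →
      (∀ i, c' i = c i ∨ G.Adj (c i) (c' i)) → ∀ i, c' i ≠ r :=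
    fun hr hmove i h => (hmove i).elim (fun h' => (far hr i).1 (h' ▸ h))
      (fun h' => (far hr i).2 (h ▸ h'))
  rintro ⟨CS, hCS⟩
  let RS : RobStrat G j :=
    { init := fun c => (init c).choose
      move := fun c r => if h : ∃ r', (r' = r ∨ G.Adj r r') ∧ Inv c r' then h.choose else r
      valid := fun c r => by
        split_ifs with h
        exacts [h.choose_spec.1, .inl rfl] }
  have hInv : ∀ m, Inv (gplay CS.init CS.move RS.init RS.move m).1
      (gplay CS.init CS.move RS.init RS.move m).2 := by
    intro m
    induction m with
    | zero => exact (init CS.init).choose_spec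
    | succ m ih =>
      have hmove := CS.valid (gplay CS.init CS.move RS.init RS.move m).1
        (gplay CS.init CS.move RS.init RS.move m).2
      have h := step ih hmove (uncaught ih hmove)
      simp only [gplay, RS, dif_pos h]
      exact h.choose_spec.2
  obtain ⟨m, i, hcaught⟩ := hCS RS
  exact hcaught.elim (far (hInv m) i).1 (uncaught (hInv m) (CS.valid _ _) i)

lemma copsWin_natCard [Finite V] (G : SimpleGraph V) : CopsWin G (Nat.card V) :=
  ⟨⟨(Finite.equivFin V).symm, fun c _ => c, fun _ _ _ => .inl rfl⟩,
    fun RS => ⟨0, Finite.equivFin V (RS.init (Finite.equivFin V).symm), .inl (by simp [gplay])⟩⟩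

lemma lt_copNumber_of_forall_not_copsWin [Finite V] (h : ∀ j ≤ k, ¬ CopsWin G j) :
    k < copNumber G := by
  by_contra! hle
  exact h _ hle (Nat.sInf_mem (s := {j | CopsWin G j}) ⟨_, copsWin_natCard G⟩)

lemma Walk.two_mul_countP_support (P : V → Bool) (hP : ∀ ⦃x y⦄, G.Adj x y → P x ≠ P y)
    {a b : V} (p : G.Walk a b) :
    2 * p.support.countP P = p.length + (P a).toNat + (P b).toNat := by
  induction p with
  | nil => cases h : P _ <;> simp [h]
  | @cons a v b h p ih =>
    have hav := hP h
    rw [Walk.support_cons, List.countP_cons, Walk.length_cons]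
    cases ha : P a <;> cases hv : P v <;> simp_all
    omega

variable (H : SimpleGraph V)

def subdivision : SimpleGraph (V ⊕ H.edgeSet) where
  Adj
    | .inl v, .inr e => v ∈ (e : Sym2 V)
    | .inr e, .inl v => v ∈ (e : Sym2 V)
    | _, _ => False
  symm := ⟨by rintro (u | e) (v | f) h <;> exact h⟩
  loopless := ⟨by rintro (u | e) h <;> exact h⟩

variable {H}

@[simp] lemma subdivision_adj_inl_inr {v : V} {e : H.edgeSet} :
    H.subdivision.Adj (.inl v) (.inr e) ↔ v ∈ (e : Sym2 V) := Iff.rfl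

@[simp] lemma subdivision_adj_inr_inl {v : V} {e : H.edgeSet} :
    H.subdivision.Adj (.inr e) (.inl v) ↔ v ∈ (e : Sym2 V) := Iff.rfl

@[simp] lemma not_subdivision_adj_inl_inl {u v : V} : ¬ H.subdivision.Adj (.inl u) (.inl v) := id

@[simp] lemma not_subdivision_adj_inr_inr {e f : H.edgeSet} :
    ¬ H.subdivision.Adj (.inr e) (.inr f) := id

lemma isLeft_ne_of_subdivision_adj {x y : V ⊕ H.edgeSet} (h : H.subdivision.Adj x y) :
    x.isLeft ≠ y.isLeft := by
  rcases x with u | e <;> rcases y with v | f <;> simp_all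

lemma isVertexCover_subdivision_range_inl : H.subdivision.IsVertexCover (Set.range Sum.inl) := by
  intro x y h
  rcases x with u | e <;> rcases y with v | f <;> simp_all

lemma ncard_neighborSet_inr_subdivision_le (e : H.edgeSet) :
    (H.subdivision.neighborSet (.inr e)).ncard ≤ 2 := by
  obtain ⟨e, he⟩ := e
  induction e with
  | h a b =>
    have hsub : H.subdivision.neighborSet (.inr ⟨s(a, b), he⟩) ⊆ {.inl a, .inl b} := by
      rintro (v | f) hv <;> simp_all
    exact (Set.ncard_le_ncard hsub (Set.toFinite _)).trans <|
      (Set.ncard_insert_le _ _).trans (by rw [Set.ncard_singleton])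

lemma insert_neighborSet_inl_subdivision_inter_range_inl (v : V) :
    insert (.inl v) (H.subdivision.neighborSet (.inl v)) ∩ Set.range Sum.inl = {.inl v} := by
  ext (u | e) <;> simp [eq_comm]

def Walk.subdivide : ∀ {u v : V}, H.Walk u v → H.subdivision.Walk (.inl u) (.inl v)
  | _, _, .nil => .nil
  | u, _, .cons (v := w) h p =>
    .cons (v := .inr ⟨s(u, w), h⟩) (subdivision_adj_inl_inr.2 (Sym2.mem_mk_left u w))
      (.cons (subdivision_adj_inr_inl.2 (Sym2.mem_mk_right u w)) p.subdivide)

@[simp] lemma Walk.length_subdivide {u v : V} (p : H.Walk u v) :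
    p.subdivide.length = 2 * p.length := by
  induction p with
  | nil => rfl
  | cons h p ih => simp [subdivide, ih]; ring

lemma exists_walk_inl_subdivision (x : V ⊕ H.edgeSet) :
    ∃ u, ∃ p : H.subdivision.Walk (.inl u) x, p.length = x.isRight.toNat := by
  rcases x with u | ⟨e, he⟩
  · exact ⟨u, .nil, rfl⟩
  · obtain ⟨u, hu⟩ : ∃ u, u ∈ e := ⟨_, Sym2.out_fst_mem e⟩
    exact ⟨u, .cons (subdivision_adj_inl_inr.2 hu) .nil, rfl⟩

lemma Connected.subdivision (h : H.Connected) : H.subdivision.Connected := by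
  have : Nonempty (V ⊕ H.edgeSet) := h.nonempty.map Sum.inl
  refine .mk fun x y => ?_
  obtain ⟨u, p, -⟩ := exists_walk_inl_subdivision x
  obtain ⟨v, q, -⟩ := exists_walk_inl_subdivision y
  obtain ⟨r⟩ := h u v
  exact ⟨p.reverse.append (r.subdivide.append q)⟩

lemma dist_subdivision_le (hH : H.ediam ≤ 2) (x y : V ⊕ H.edgeSet) :
    H.subdivision.dist x y ≤ x.isRight.toNat + 4 + y.isRight.toNat := by
  obtain ⟨u, p, hp⟩ := exists_walk_inl_subdivision x
  obtain ⟨v, q, hq⟩ := exists_walk_inl_subdivision y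
  have huv : H.edist u v ≤ 2 := edist_le_ediam.trans hH
  obtain ⟨r, hr⟩ := exists_walk_of_edist_ne_top (huv.trans_lt (by decide)).ne
  have hr2 : r.length ≤ 2 := by rw [← hr] at huv; exact_mod_cast huv
  calc H.subdivision.dist x y ≤ (p.reverse.append (r.subdivide.append q)).length := dist_le _
    _ ≤ x.isRight.toNat + 4 + y.isRight.toNat := by simp [hp, hq]; omega

lemma ncard_support_inl_subdivision_le (hH : H.ediam ≤ 2) {a b : V ⊕ H.edgeSet}
    (p : H.subdivision.Walk a b) (hp : p.length = H.subdivision.dist a b) :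
    {x | x ∈ p.support ∧ x ∈ Set.range Sum.inl}.ncard ≤ 3 := by
  have hcount := p.support.ncard_setOf_mem_and_le_countP Sum.isLeft
  have hpar := p.two_mul_countP_support Sum.isLeft fun _ _ => isLeft_ne_of_subdivision_adj
  have hdist := dist_subdivision_le hH a b
  have hends : ∀ z : V ⊕ H.edgeSet, z.isLeft.toNat + z.isRight.toNat = 1 := by
    rintro (_ | _) <;> rfl
  rw [Set.range_inl]
  change {x | x ∈ p.support ∧ x.isLeft}.ncard ≤ 3
  have := hends a
  have := hends b
  omega

variable (H) in
def HasEscapeNeighbors (k : ℕ) : Prop :=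
  ∀ (u : V) (X : Finset V), X.card ≤ k → u ∉ X → ∃ w, H.Adj u w ∧ ∀ x ∈ X, x ≠ w ∧ ¬ H.Adj x w

lemma HasEscapeNeighbors.exists_notMem [Nonempty V] (h : H.HasEscapeNeighbors k)
    (X : Finset V) (hX : X.card ≤ k) : ∃ u, u ∉ X := by
  classical
  by_contra! hall
  obtain ⟨u⟩ := ‹Nonempty V›
  obtain ⟨w, huw, hw⟩ := h u (X.erase u) (card_erase_le.trans hX) (notMem_erase u X)
  exact (hw w (mem_erase.2 ⟨huw.ne', hall w⟩)).1 rfl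

variable (H) in
/-- A cop at `p` guards `w` when it can reach `inl w` within two moves. -/
def Guards : V ⊕ H.edgeSet → V → Prop
  | .inl a, w => a = w ∨ H.Adj a w
  | .inr f, w => w ∈ (f : Sym2 V)

lemma HasEscapeNeighbors.exists_unguarded (h : H.HasEscapeNeighbors k) (hj : j ≤ k)
    (c : Fin j → V ⊕ H.edgeSet) (u : V) (hu : ∀ i, c i ≠ .inl u) :
    ∃ w, H.Adj u w ∧ ∀ i, ¬ H.Guards (c i) w := by
  classical
  have hproj : ∀ i, ∃ x, x ≠ u ∧ ∀ w, H.Guards (c i) w → x = w ∨ H.Adj x w := by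
    intro i
    rcases hci : c i with a | ⟨f, hf⟩
    · exact ⟨a, fun h => hu i (hci ▸ congrArg _ h), fun _ => id⟩
    · induction f with
      | h a b =>
        by_cases hau : a = u
        · subst hau
          refine ⟨b, (H.ne_of_adj hf).symm, fun w hw => ?_⟩
          rcases Sym2.mem_iff.1 hw with rfl | rfl
          exacts [.inr (H.mem_edgeSet.1 hf).symm, .inl rfl]
        · refine ⟨a, hau, fun w hw => ?_⟩
          rcases Sym2.mem_iff.1 hw with rfl | rfl
          exacts [.inl rfl, .inr hf]
  choose x hxu hx using hproj
  obtain ⟨w, huw, hw⟩ := h u (univ.image x) (card_image_le.trans (by simpa using hj))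
    (by simpa using hxu)
  refine ⟨w, huw, fun i hi => ?_⟩
  obtain ⟨hne, hnadj⟩ := hw (x i) (mem_image_of_mem x (mem_univ i))
  exact (hx i w hi).elim hne hnadj

lemma guards_of_move_near {p p' : V ⊕ H.edgeSet} {w : V}
    (hmove : p' = p ∨ H.subdivision.Adj p p')
    (hnear : p' = .inl w ∨ H.subdivision.Adj p' (.inl w)) : H.Guards p w := by
  rcases p with a | ⟨f, hf⟩ <;> rcases p' with b | ⟨g, hg⟩
  case inl.inr =>
    replace hmove : a ∈ g := hmove.resolve_left nofun
    replace hnear : w ∈ g := hnear.resolve_left nofun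
    by_cases haw : a = w
    · exact .inl haw
    · exact .inr (H.mem_edgeSet.1 ((Sym2.mem_and_mem_iff haw).1 ⟨hmove, hnear⟩ ▸ hg))
  all_goals simp_all [Guards]

variable (H) in
def RobberInv (c : Fin j → V ⊕ H.edgeSet) (r : V ⊕ H.edgeSet) : Prop :=
  (∀ i, c i ≠ r ∧ ¬ H.subdivision.Adj (c i) r) ∧
    ∀ e, r = .inr e → ∃ w ∈ (e : Sym2 V), ∀ i, ¬ H.Guards (c i) w

lemma HasEscapeNeighbors.exists_adj_robberInv (h : H.HasEscapeNeighbors k) (hj : j ≤ k)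
    (c : Fin j → V ⊕ H.edgeSet) (u : V) (hu : ∀ i, c i ≠ .inl u) :
    ∃ r, H.subdivision.Adj (.inl u) r ∧ H.RobberInv c r := by
  obtain ⟨w, huw, hw⟩ := h.exists_unguarded hj c u hu
  refine ⟨.inr ⟨s(u, w), huw⟩, Sym2.mem_mk_left u w, fun i => ⟨?_, ?_⟩, ?_⟩
  · rintro hci
    exact hw i (hci ▸ Sym2.mem_mk_right u w)
  · rcases hci : c i with a | f
    · intro hadj
      rcases Sym2.mem_iff.1 (subdivision_adj_inl_inr.1 hadj) with rfl | rfl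
      exacts [hu i hci, hw i (hci ▸ .inl rfl)]
    · exact not_subdivision_adj_inr_inr
  · rintro _ ⟨⟩
    exact ⟨w, Sym2.mem_mk_right u w, hw⟩

lemma robberInv_inl_of_unguarded {c c' : Fin j → V ⊕ H.edgeSet} {w : V}
    (hw : ∀ i, ¬ H.Guards (c i) w) (hmove : ∀ i, c' i = c i ∨ H.subdivision.Adj (c i) (c' i)) :
    H.RobberInv c' (.inl w) :=
  ⟨fun i => ⟨fun h => hw i (guards_of_move_near (hmove i) (.inl h)),
    fun h => hw i (guards_of_move_near (hmove i) (.inr h))⟩, by rintro _ ⟨⟩⟩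

lemma HasEscapeNeighbors.not_copsWin_subdivision [Nonempty V] (h : H.HasEscapeNeighbors k)
    (hj : j ≤ k) : ¬ CopsWin H.subdivision j := by
  refine not_copsWin_of_invariant H.RobberInv (fun hr => hr.1) (fun c => ?_)
    (fun {c r c'} hr hmove hc' => ?_)
  · classical
    obtain ⟨v⟩ := ‹Nonempty V›
    let occupied : Fin j → V := fun i => (c i).elim id fun _ => v
    obtain ⟨u, hu⟩ :=
      h.exists_notMem (univ.image occupied) (card_image_le.trans (by simpa using hj))
    obtain ⟨r, -, hr⟩ := h.exists_adj_robberInv hj c u fun i hi =>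
      hu (mem_image.2 ⟨i, mem_univ i, by simp [occupied, hi]⟩)
    exact ⟨r, hr⟩
  · rcases r with u | e
    · obtain ⟨r', hadj, hr'⟩ := h.exists_adj_robberInv hj c' u hc'
      exact ⟨r', .inr hadj, hr'⟩
    · obtain ⟨w, hwe, hw⟩ := hr.2 e rfl
      exact ⟨.inl w, .inr hwe, robberInv_inl_of_unguarded hw hmove⟩

variable {α : Type*} {s : ℕ}

variable (α s) in
def kneserGraph : SimpleGraph {A : Finset α // A.card = s} where
  Adj A B := A ≠ B ∧ Disjoint A.1 B.1
  symm := ⟨fun _ _ h => ⟨h.1.symm, h.2.symm⟩⟩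
  loopless := ⟨fun _ h => h.1 rfl⟩

lemma nonempty_finset_card_eq [Fintype α] (h : s ≤ Fintype.card α) :
    Nonempty {A : Finset α // A.card = s} :=
  let ⟨A, _, hA⟩ := exists_subset_card_eq (s := univ) h
  ⟨⟨A, hA⟩⟩

lemma kneserGraph_adj_of_disjoint (hs : 0 < s) {A B : {A : Finset α // A.card = s}}
    (h : Disjoint A.1 B.1) : (kneserGraph α s).Adj A B := by
  refine ⟨fun hAB => ?_, h⟩
  subst hAB
  have := A.2
  rw [disjoint_self.1 h, bot_eq_empty, card_empty] at this
  omega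

lemma kneserGraph_ediam_le_two [Fintype α] (hs : 0 < s) (hn : 3 * s ≤ Fintype.card α) :
    (kneserGraph α s).ediam ≤ 2 := by
  classical
  refine ediam_le_of_edist_le fun A B => ?_
  have hcard : s ≤ (A.1 ∪ B.1)ᶜ.card := by
    have := card_union_le A.1 B.1
    rw [card_compl, A.2, B.2] at *
    omega
  obtain ⟨C, hC, hCcard⟩ := exists_subset_card_eq hcard
  have hCAB : Disjoint C (A.1 ∪ B.1) := le_compl_iff_disjoint_right.1 hC
  rw [disjoint_union_right] at hCAB
  let C' : {A : Finset α // A.card = s} := ⟨C, hCcard⟩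
  have hAC : (kneserGraph α s).Adj A C' := kneserGraph_adj_of_disjoint hs hCAB.1.symm
  have hCB : (kneserGraph α s).Adj C' B := kneserGraph_adj_of_disjoint hs hCAB.2
  exact (Walk.cons hAC (Walk.cons hCB .nil)).edist_le

lemma kneserGraph_hasEscapeNeighbors [Fintype α] (hks : k < s)
    (hn : (k + 2) * s ≤ Fintype.card α) : (kneserGraph α s).HasEscapeNeighbors k := by
  classical
  intro u X hX huX
  obtain ⟨y, hy⟩ : ∃ y, y ∉ u.1 ∪ X.biUnion Subtype.val := by
    by_contra! hall
    have h1 := card_le_card fun y (_ : y ∈ univ) => hall y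
    have h2 := card_union_le u.1 (X.biUnion Subtype.val)
    have h3 := card_biUnion_le_card_mul X Subtype.val s fun x _ => x.2.le
    rw [card_univ, u.2] at *
    nlinarith
  rw [mem_union, mem_biUnion, not_or, not_exists] at hy
  have hpick : ∀ x : {A : Finset α // A.card = s}, ∃ a, x ≠ u → a ∈ x.1 ∧ a ∉ u.1 := by
    intro x
    by_cases hxu : x = u
    · exact ⟨y, absurd hxu⟩
    obtain ⟨a, ha⟩ := sdiff_nonempty.2 fun hsub =>
      hxu (Subtype.ext (eq_of_subset_of_card_le hsub (by rw [x.2, u.2])))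
    exact ⟨a, fun _ => mem_sdiff.1 ha⟩
  choose pick hpick using hpick
  have hB : insert y (X.image pick) ⊆ u.1ᶜ := by
    intro a ha
    rw [mem_compl]
    rcases mem_insert.1 ha with rfl | ha
    · exact hy.1
    · obtain ⟨x, hx, rfl⟩ := mem_image.1 ha
      exact (hpick x (ne_of_mem_of_not_mem hx huX)).2
  have hBcard : (insert y (X.image pick)).card ≤ s :=
    (card_insert_le _ _).trans (by have := card_image_le (s := X) (f := pick); omega)
  have hcompl : s ≤ u.1ᶜ.card := by
    have : 2 * s ≤ Fintype.card α := le_trans (by nlinarith) hn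
    rw [card_compl, u.2]
    omega
  obtain ⟨w, hBw, hwu, hw⟩ := exists_subsuperset_card_eq hB hBcard hcompl
  have hyw : y ∈ w := hBw (mem_insert_self _ _)
  refine ⟨⟨w, hw⟩, ⟨fun h => hy.1 (by rw [h]; exact hyw), ?_⟩, fun x hx => ⟨?_, ?_⟩⟩
  · exact (le_compl_iff_disjoint_right.1 hwu).symm
  · rintro rfl
    exact hy.2 _ ⟨hx, hyw⟩
  · rintro ⟨-, hdisj⟩
    have hxu : x ≠ u := ne_of_mem_of_not_mem hx huX
    exact Finset.disjoint_left.1 hdisj (hpick x hxu).1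
      (hBw (mem_insert_of_mem (mem_image_of_mem pick hx)))

def IsRulesCounterexample (G : SimpleGraph V) (U : Set V) (k : ℕ) : Prop :=
  G.Connected ∧ G.IsVertexCover U ∧ (∀ v, v ∉ U → (G.neighborSet v).ncard ≤ 3) ∧
    (∀ v ∈ U, ((insert v (G.neighborSet v)) ∩ U).ncard ≤ 3) ∧
    (∀ (a b : V) (p : G.Walk a b), p.IsPath → p.length = G.dist a b →
      {x | x ∈ p.support ∧ x ∈ U}.ncard ≤ 3) ∧
    k < copNumber G

lemma Iso.ncard_support_inter_image (φ : G ≃g G') (U : Set V) {a b : W} (p : G'.Walk a b) :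
    {x | x ∈ p.support ∧ x ∈ φ '' U}.ncard =
      {x | x ∈ (p.map φ.symm.toHom).support ∧ x ∈ U}.ncard := by
  have hsymm : ∀ y x, φ.symm y = x ↔ y = φ x :=
    fun y x => ⟨by rintro rfl; simp, by rintro rfl; simp⟩
  rw [← Set.ncard_image_of_injective _ φ.symm.injective]
  congr 1
  ext x
  simp [hsymm]

lemma IsRulesCounterexample.of_iso {U : Set V} (φ : G ≃g G') (h : G.IsRulesCounterexample U k) :
    G'.IsRulesCounterexample (φ '' U) k := by
  obtain ⟨hconn, hcover, hdeg, hclosed, hisom, hcop⟩ := h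
  refine ⟨φ.connected_iff.mp hconn, ?_, fun v hv => ?_, ?_, fun a b p hp hlen => ?_,
    φ.copNumber_eq ▸ hcop⟩
  · rwa [RelIso.image_eq_preimage_symm, isVertexCover_preimage_iso]
  · obtain ⟨v, rfl⟩ := φ.surjective v
    rw [φ.neighborSet_apply, Set.ncard_image_of_injective _ φ.injective]
    exact hdeg v fun hv' => hv (Set.mem_image_of_mem φ hv')
  · rintro _ ⟨v, hv, rfl⟩
    rw [φ.neighborSet_apply, ← Set.image_insert_eq, ← Set.image_inter φ.injective,
      Set.ncard_image_of_injective _ φ.injective]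
    exact hclosed v hv
  · rw [φ.ncard_support_inter_image]
    refine hisom _ _ _ (hp.map φ.symm.injective) ?_
    simp [hlen, ← φ.symm.dist_eq]

lemma isRulesCounterexample_subdivision [Finite V] [Nonempty V] (hH : H.ediam ≤ 2)
    (hesc : H.HasEscapeNeighbors k) : H.subdivision.IsRulesCounterexample (Set.range Sum.inl) k :=
  ⟨(connected_of_ediam_ne_top (hH.trans_lt (by decide)).ne).subdivision,
    isVertexCover_subdivision_range_inl,
    by
      rintro (v | e) hv
      exacts [absurd ⟨v, rfl⟩ hv, (ncard_neighborSet_inr_subdivision_le e).trans (by norm_num)],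
    by
      rintro _ ⟨v, rfl⟩
      rw [insert_neighborSet_inl_subdivision_inter_range_inl, Set.ncard_singleton]
      norm_num,
    fun _ _ p _ hp => ncard_support_inl_subdivision_le hH p hp,
    lt_copNumber_of_forall_not_copsWin fun _ hj => hesc.not_copsWin_subdivision hj⟩

end SimpleGraph

/-- For every `k` there is a connected graph `G` with a vertex cover `U` such that every
vertex outside `U` has at most 3 neighbours, every `v ∈ U` has `|N[v] ∩ U| ≤ 3`, every
isometric path contains at most 3 vertices of `U`, and yet `c(G) > k`. -/
theorem exists_graph_rules_fail_large_copNumber :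
    ∀ k : ℕ, ∃ (n : ℕ) (G : SimpleGraph (Fin n)) (U : Set (Fin n)),
      G.Connected ∧
      (∀ ⦃x y : Fin n⦄, G.Adj x y → x ∈ U ∨ y ∈ U) ∧
      (∀ v, v ∉ U → (G.neighborSet v).ncard ≤ 3) ∧
      (∀ v ∈ U, ((insert v (G.neighborSet v)) ∩ U).ncard ≤ 3) ∧
      (∀ (a b : Fin n) (p : G.Walk a b), p.IsPath → p.length = G.dist a b →
        {x | x ∈ p.support ∧ x ∈ U}.ncard ≤ 3) ∧
      k < copNumber G := by
  intro k
  have hcard : Fintype.card (Fin ((k + 3) * (k + 1))) = (k + 3) * (k + 1) := Fintype.card_fin _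
  have := nonempty_finset_card_eq (s := k + 1) (by rw [hcard]; nlinarith)
  have h := isRulesCounterexample_subdivision
    (kneserGraph_ediam_le_two k.succ_pos (by rw [hcard]; nlinarith))
    (kneserGraph_hasEscapeNeighbors k.lt_succ_self (by rw [hcard]; nlinarith))
  exact ⟨_, _, _, h.of_iso (Iso.map (Finite.equivFin _) _)⟩
end
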